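/- arXiv:2011.10172 — 3 statements merged into one kernel-verified Lean document; each statement's English description precedes it below -/
import Mathlib

section
/- For all integers n ≥ 1 and k with 0 ≤ k ≤ ⌊(n−1)/2⌋, the minimum forcing number of the graph H_k equals n − k − 1, i.e., f(H_k) = n − k − 1. -/
open SimpleGraph

/-- `M` is a perfect matching of the simple graph `G`, viewed as a set of edges:
the edges of `M` are pairwise disjoint edges of `G` covering every vertex. -/
def IsPM {V : Type*} (G : SimpleGraph V) (M : Set (Sym2 V)) : Prop :=
  M ⊆ G.edgeSet ∧
  (∀ e ∈ M, ∀ f ∈ M, e ≠ f → ∀ v : V, v ∈ e → v ∉ f) ∧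
  (∀ v : V, ∃ e ∈ M, v ∈ e)

/-- `S` is a forcing set of the perfect matching `M` of `G`:
`S ⊆ M` and `M` is the unique perfect matching of `G` containing `S`. -/
def IsForcingSet {V : Type*} (G : SimpleGraph V) (M S : Set (Sym2 V)) : Prop :=
  S ⊆ M ∧ ∀ M', IsPM G M' → S ⊆ M' → M' = M

/-- The forcing number `f(G,M)`: smallest cardinality of a forcing set of `M`. -/
noncomputable def forcingNum {V : Type*} (G : SimpleGraph V) (M : Set (Sym2 V)) : ℕ :=
  sInf {k | ∃ S, IsForcingSet G M S ∧ S.ncard = k}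

/-- The minimum forcing number `f(G)`. -/
noncomputable def minForcing {V : Type*} (G : SimpleGraph V) : ℕ :=
  sInf {k | ∃ M, IsPM G M ∧ forcingNum G M = k}

/-- The maximum forcing number `F(G)`. -/
noncomputable def maxForcing {V : Type*} (G : SimpleGraph V) : ℕ :=
  sSup {k | ∃ M, IsPM G M ∧ forcingNum G M = k}

/-- Vertex connectivity `κ(G)`: least size of a set of vertices whose deletion
disconnects the graph or leaves at most one vertex. -/
noncomputable def vertexConn {V : Type*} (G : SimpleGraph V) : ℕ :=
  sInf {k | ∃ X : Set V, X.ncard = k ∧ (¬ (G.induce Xᶜ).Connected ∨ Xᶜ.ncard ≤ 1)}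

/-- Edge connectivity `λ(G)`: least size of a set of edges whose deletion
disconnects the graph. -/
noncomputable def edgeConn {V : Type*} (G : SimpleGraph V) : ℕ :=
  sInf {k | ∃ F : Set (Sym2 V), F ⊆ G.edgeSet ∧ F.ncard = k ∧ ¬ (G.deleteEdges F).Connected}

/-- `G` is `l`-extendable: `G` is connected, has at least `2l+2` vertices, has a
perfect matching, and every matching of size `l` extends to a perfect matching. -/
def IsExtendable {V : Type*} [Fintype V] (G : SimpleGraph V) (l : ℕ) : Prop :=
  G.Connected ∧ 2 * l + 2 ≤ Fintype.card V ∧ (∃ M, IsPM G M) ∧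
    ∀ N : Set (Sym2 V), N ⊆ G.edgeSet →
      (∀ e ∈ N, ∀ f ∈ N, e ≠ f → ∀ v : V, v ∈ e → v ∉ f) → N.ncard = l →
      ∃ M, IsPM G M ∧ N ⊆ M

/-- `G` is factor-critical: deleting any vertex leaves a graph with a perfect matching. -/
def IsFactorCritical {V : Type*} (G : SimpleGraph V) : Prop :=
  ∀ v : V, ∃ M, IsPM (G.induce {v}ᶜ) M

/-- `o(G)`: the number of connected components of odd order. -/
noncomputable def oddComponents {V : Type*} (G : SimpleGraph V) : ℕ :=
  {c : G.ConnectedComponent | Odd c.supp.ncard}.ncard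

/-- `G` belongs to `𝒦_{n,n}⁺`: it is obtained from `K_{n,n}` by adding edges inside one
partite set; equivalently there is an independent set `A` of size `n` all of whose
vertices are adjacent to all vertices outside `A`. -/
def InKnnPlus {V : Type*} (n : ℕ) (G : SimpleGraph V) : Prop :=
  ∃ A : Set V, A.ncard = n ∧ (∀ a ∈ A, ∀ b ∈ A, ¬ G.Adj a b) ∧
    ∀ a ∈ A, ∀ b ∉ A, G.Adj a b

/-- `M` is a perfect matching of the subgraph of `G` induced by the vertex set `T`. -/
def IsPMOn {V : Type*} (G : SimpleGraph V) (T : Set V) (M : Set (Sym2 V)) : Prop :=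
  M ⊆ G.edgeSet ∧ (∀ e ∈ M, ∀ w : V, w ∈ e → w ∈ T) ∧
  (∀ e ∈ M, ∀ f ∈ M, e ≠ f → ∀ v : V, v ∈ e → v ∉ f) ∧
  (∀ w ∈ T, ∃ e ∈ M, w ∈ e)

/-- The forcing number of the perfect matching `M` of the subgraph of `G`
induced by the vertex set `T`. -/
noncomputable def forcingNumOn {V : Type*} (G : SimpleGraph V) (T : Set V)
    (M : Set (Sym2 V)) : ℕ :=
  sInf {k | ∃ S, S ⊆ M ∧ (∀ M', IsPMOn G T M' → S ⊆ M' → M' = M) ∧ S.ncard = k}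

/-- `{i,j}` is one of the `k` special pairs `{2t, 2t+1}` (0-indexed), `t < k`. -/
def pairIdx (k : ℕ) {n : ℕ} (i j : Fin n) : Prop :=
  ∃ t, t < k ∧ ((i.val = 2 * t ∧ j.val = 2 * t + 1) ∨ (j.val = 2 * t ∧ i.val = 2 * t + 1))

/-- The graph `H_k` on vertices `u_0,…,u_{n-1}` (left copy) and `v_0,…,v_{n-1}`
(right copy): edges `u_i v_i` for all `i`; `u_{2t} u_{2t+1}` and `v_{2t} v_{2t+1}`
for `t < k`; and `u_i v_j`, `u_j v_i` for every pair `i ≠ j` that is not one of the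
`k` special pairs. -/
def Hgraph (n k : ℕ) : SimpleGraph (Fin n ⊕ Fin n) :=
  SimpleGraph.fromRel (fun x y =>
    match x, y with
    | Sum.inl i, Sum.inr j => i = j ∨ ¬ pairIdx k i j
    | Sum.inl i, Sum.inl j => pairIdx k i j
    | Sum.inr i, Sum.inr j => pairIdx k i j
    | Sum.inr _, Sum.inl _ => False)

/-- The perfect matching `M₀ = {u_i v_i : i}` of `H_k`. -/
def M0 (n : ℕ) : Set (Sym2 (Fin n ⊕ Fin n)) :=
  {e | ∃ i : Fin n, e = s(Sum.inl i, Sum.inr i)}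

/-!
If `S` forces `M`, no two edges of `M \ S` lie on an `M`-alternating 4-cycle, since swapping
them along the cycle gives a second perfect matching containing `S`. In `H_k` the two special
edges of one block always lie on such a cycle, and two cross edges `u_a v_b`, `u_c v_d` avoid
one only when `{a, d}` or `{c, b}` is a special pair; the block of that pair then carries no
special edge of `M`, and it accounts for at most two such ordered pairs. Counting blocks gives
`|M \ S| ≤ k + 1`, while `|M| = n`.

Conversely, let `M` consist of all `2k` special edges and the edges `u_i v_i`, `i ≥ 2k`, and let
`S` be its `n - k - 1` edges at `u_0, …, u_{n-2}`. In a perfect matching containing `S`, the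
vertex `v_{n-1}` can only be matched to `u_{n-1}`, and then each `v_{2t}` only to `v_{2t+1}`.
-/

section PerfectMatching

variable {V : Type*} {G : SimpleGraph V} {M M' N N' S : Set (Sym2 V)}

theorem IsPM.eq_of_mem_of_mem (hM : IsPM G M) {e f : Sym2 V} (he : e ∈ M) (hf : f ∈ M) {v : V}
    (hve : v ∈ e) (hvf : v ∈ f) : e = f := by
  by_contra hne
  exact hM.2.1 e he f hf hne v hve hvf

theorem IsPM.eq_of_subset (hM : IsPM G M) (hM' : IsPM G M') (h : M ⊆ M') : M' = M := by
  refine Set.Subset.antisymm ?_ h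
  intro e he
  obtain ⟨v, w⟩ := e
  obtain ⟨f, hf, hvf⟩ := hM.2.2 v
  rwa [hM'.eq_of_mem_of_mem he (h hf) (Sym2.mem_mk_left v w) hvf]

theorem IsPM.isForcingSet_self (hM : IsPM G M) : IsForcingSet G M M :=
  ⟨subset_rfl, fun _ hM' h => hM.eq_of_subset hM' h⟩

theorem IsPM.card_le_two_mul_ncard [Fintype V] (hM : IsPM G M) :
    Fintype.card V ≤ 2 * M.ncard := by
  classical
  have hcover : (Set.toFinite M).toFinset.biUnion (fun e => e.toFinset) = Finset.univ := by
    refine Finset.eq_univ_of_forall fun v => ?_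
    obtain ⟨e, he, hve⟩ := hM.2.2 v
    exact Finset.mem_biUnion.mpr ⟨e, by simpa using he, by simpa using hve⟩
  calc Fintype.card V
      = ((Set.toFinite M).toFinset.biUnion (fun e => e.toFinset)).card := by rw [hcover]; rfl
    _ ≤ ∑ e ∈ (Set.toFinite M).toFinset, e.toFinset.card := Finset.card_biUnion_le
    _ ≤ ∑ _e ∈ (Set.toFinite M).toFinset, 2 := by
        gcongr with e; rw [Sym2.card_toFinset]; split <;> omega
    _ = 2 * M.ncard := by rw [Set.ncard_eq_toFinset_card M, Finset.sum_const, smul_eq_mul, mul_comm]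

theorem IsPM.sdiff_union (hM : IsPM G M) (hN : N ⊆ M) (hN'G : N' ⊆ G.edgeSet)
    (hN' : ∀ e ∈ N', ∀ f ∈ N', e ≠ f → ∀ v : V, v ∈ e → v ∉ f)
    (hcov : ∀ v, (∃ e ∈ N, v ∈ e) ↔ ∃ e ∈ N', v ∈ e) : IsPM G (M \ N ∪ N') := by
  refine ⟨Set.union_subset (Set.sdiff_subset.trans hM.1) hN'G, ?_, fun v => ?_⟩
  · have key : ∀ e ∈ M \ N, ∀ f ∈ N', ∀ v : V, v ∈ e → v ∉ f := by
      intro e ⟨he, heN⟩ f hf v hve hvf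
      obtain ⟨g, hg, hvg⟩ := (hcov v).mpr ⟨f, hf, hvf⟩
      exact heN (hM.eq_of_mem_of_mem he (hN hg) hve hvg ▸ hg)
    rintro e (he | he) f (hf | hf) hne v hve hvf
    · exact hM.2.1 e he.1 f hf.1 hne v hve hvf
    · exact key e he f hf v hve hvf
    · exact key f hf e he v hvf hve
    · exact hN' e he f hf hne v hve hvf
  · by_cases hv : ∃ e ∈ N, v ∈ e
    · obtain ⟨e, he, hve⟩ := (hcov v).mp hv
      exact ⟨e, Or.inr he, hve⟩
    · obtain ⟨e, he, hve⟩ := hM.2.2 v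
      exact ⟨e, Or.inl ⟨he, fun heN => hv ⟨e, heN, hve⟩⟩, hve⟩

/-- Two edges of `M \ S` on an alternating 4-cycle `v₁v₂v₃v₄` could be swapped for the other
two edges of the cycle, giving a second perfect matching containing `S`. -/
theorem IsForcingSet.false_of_alternating_square (hM : IsPM G M) (hS : IsForcingSet G M S)
    {v₁ v₂ v₃ v₄ : V} (h₁₂ : s(v₁, v₂) ∈ M \ S) (h₃₄ : s(v₃, v₄) ∈ M \ S)
    (h₁₃ : v₁ ≠ v₃) (h₂₄ : v₂ ≠ v₄) (h₂₃ : G.Adj v₂ v₃) (h₄₁ : G.Adj v₄ v₁) : False := by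
  have a₁₂ : G.Adj v₁ v₂ := hM.1 h₁₂.1
  have a₃₄ : G.Adj v₃ v₄ := hM.1 h₃₄.1
  have hM' : IsPM G (M \ {s(v₁, v₂), s(v₃, v₄)} ∪ {s(v₂, v₃), s(v₄, v₁)}) := by
    refine hM.sdiff_union (by simp [Set.insert_subset_iff, h₁₂.1, h₃₄.1])
      (by simp [Set.insert_subset_iff, h₂₃, h₄₁]) ?_ (fun v => ?_)
    · have hdisj : ∀ v, v ∈ s(v₂, v₃) → v ∉ s(v₄, v₁) := by
        simp only [Sym2.mem_iff]
        rintro v (rfl | rfl) (rfl | rfl)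
        exacts [h₂₄ rfl, a₁₂.ne rfl, a₃₄.ne rfl, h₁₃ rfl]
      simp only [Set.mem_insert_iff, Set.mem_singleton_iff]
      rintro e (rfl | rfl) f (rfl | rfl) hne v hve hvf
      exacts [hne rfl, hdisj v hve hvf, hdisj v hvf hve, hne rfl]
    · simp only [Set.mem_insert_iff, Set.mem_singleton_iff, exists_eq_or_imp, exists_eq_left,
        Sym2.mem_iff]
      tauto
  have hSM' : S ⊆ M \ {s(v₁, v₂), s(v₃, v₄)} ∪ {s(v₂, v₃), s(v₄, v₁)} := by
    intro e he
    refine Or.inl ⟨hS.1 he, ?_⟩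
    rintro (rfl | rfl)
    exacts [h₁₂.2 he, h₃₄.2 he]
  have h₂₃M : s(v₂, v₃) ∈ M := by
    rw [← hS.2 _ hM' hSM']
    exact Or.inr (Set.mem_insert _ _)
  have := hM.eq_of_mem_of_mem h₂₃M h₁₂.1 (Sym2.mem_mk_left _ _) (Sym2.mem_mk_right _ _)
  simp only [Sym2.eq_iff] at this
  rcases this with ⟨rfl, -⟩ | ⟨-, rfl⟩
  exacts [a₁₂.ne rfl, h₁₃ rfl]

theorem IsPM.mk_mem_of_forall_adj (hM : IsPM G M) (hN : N ⊆ M) {x y : V}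
    (h : ∀ z, G.Adj x z → z ≠ y → ∃ e ∈ N, z ∈ e ∧ x ∉ e) : s(x, y) ∈ M := by
  obtain ⟨e, he, hxe⟩ := hM.2.2 x
  obtain ⟨z, rfl⟩ := Sym2.mem_iff_exists.mp hxe
  by_cases hzy : z = y
  · rwa [← hzy]
  obtain ⟨f, hf, hzf, hxf⟩ := h z (hM.1 he) hzy
  rw [hM.eq_of_mem_of_mem he (hN hf) (Sym2.mem_mk_right x z) hzf] at hxe
  exact absurd hxe hxf

theorem isPM_range_of_involutive {σ : V → V} (hσ : Function.Involutive σ)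
    (hadj : ∀ v, G.Adj v (σ v)) : IsPM G (Set.range fun v => s(v, σ v)) := by
  have hedge : ∀ v w, w ∈ s(v, σ v) → s(w, σ w) = s(v, σ v) := by
    intro v w hw
    rcases Sym2.mem_iff.mp hw with rfl | rfl
    · rfl
    · rw [hσ, Sym2.eq_swap]
  refine ⟨?_, ?_, fun v => ⟨_, ⟨v, rfl⟩, Sym2.mem_mk_left _ _⟩⟩
  · rintro _ ⟨v, rfl⟩
    exact hadj v
  · rintro _ ⟨v, rfl⟩ _ ⟨w, rfl⟩ hne u hu hu'
    exact hne ((hedge v u hu).symm.trans (hedge w u hu'))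

theorem minForcing_le (hM : IsPM G M) (hS : IsForcingSet G M S) : minForcing G ≤ S.ncard :=
  calc minForcing G ≤ forcingNum G M := Nat.sInf_le ⟨M, hM, rfl⟩
    _ ≤ S.ncard := Nat.sInf_le ⟨S, hS, rfl⟩

theorem le_minForcing {m : ℕ} (hG : ∃ M, IsPM G M)
    (h : ∀ M S, IsPM G M → IsForcingSet G M S → m ≤ S.ncard) : m ≤ minForcing G := by
  obtain ⟨M₀, hM₀⟩ := hG
  refine le_csInf ⟨_, M₀, hM₀, rfl⟩ ?_
  rintro _ ⟨M, hM, rfl⟩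
  refine le_csInf ⟨_, M, hM.isForcingSet_self, rfl⟩ ?_
  rintro _ ⟨S, hS, rfl⟩
  exact h M S hM hS

end PerfectMatching

theorem Finset.card_le_two_mul_card_image_div_two (s : Finset ℕ) :
    s.card ≤ 2 * (s.image (· / 2)).card := by
  refine s.card_le_mul_card_image 2 fun t _ => ?_
  calc (s.filter fun x => x / 2 = t).card ≤ ({2 * t, 2 * t + 1} : Finset ℕ).card := by
        refine Finset.card_le_card fun x hx => ?_
        simp only [Finset.mem_filter] at hx
        simp only [Finset.mem_insert, Finset.mem_singleton]
        omega
    _ ≤ 2 := Finset.card_le_two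

open Sum

section PairIdx

variable {n k : ℕ}

theorem pairIdx_iff {i j : Fin n} :
    pairIdx k i j ↔ i.val / 2 = j.val / 2 ∧ i.val ≠ j.val ∧ i.val < 2 * k := by
  constructor
  · rintro ⟨t, ht, h | h⟩ <;> omega
  · intro h
    exact ⟨i.val / 2, by omega, by omega⟩

theorem pairIdx_comm {i j : Fin n} : pairIdx k i j ↔ pairIdx k j i := by
  simp only [pairIdx_iff]
  omega

end PairIdx

namespace Hgraph

variable {n k : ℕ}

@[simp] theorem adj_inl_inr {i j : Fin n} :
    (Hgraph n k).Adj (inl i) (inr j) ↔ i = j ∨ ¬ pairIdx k i j := by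
  simp [Hgraph]

@[simp] theorem adj_inr_inl {i j : Fin n} :
    (Hgraph n k).Adj (inr j) (inl i) ↔ i = j ∨ ¬ pairIdx k i j := by
  rw [SimpleGraph.adj_comm, adj_inl_inr]

@[simp] theorem adj_inl_inl {i j : Fin n} : (Hgraph n k).Adj (inl i) (inl j) ↔ pairIdx k i j := by
  simp only [Hgraph, SimpleGraph.fromRel_adj, ne_eq, inl.injEq, pairIdx_comm (i := j)]
  simp only [pairIdx_iff, Fin.ext_iff]
  omega

@[simp] theorem adj_inr_inr {i j : Fin n} : (Hgraph n k).Adj (inr i) (inr j) ↔ pairIdx k i j := by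
  simp only [Hgraph, SimpleGraph.fromRel_adj, ne_eq, inr.injEq, pairIdx_comm (i := j)]
  simp only [pairIdx_iff, Fin.ext_iff]
  omega

theorem edge_cases {e : Sym2 (Fin n ⊕ Fin n)} (he : e ∈ (Hgraph n k).edgeSet) :
    (∃ a b, e = s(inl a, inr b)) ∨ ∃ t < k, ∃ i j : Fin n, i.val = 2 * t ∧ j.val = 2 * t + 1 ∧
      (e = s(inl i, inl j) ∨ e = s(inr i, inr j)) := by
  induction e using Sym2.ind with
  | _ x y =>
  have hpair : ∀ i j : Fin n, pairIdx k i j → ∃ t < k, ∃ i' j' : Fin n, i'.val = 2 * t ∧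
      j'.val = 2 * t + 1 ∧ s(i, j) = s(i', j') := by
    rintro i j ⟨t, ht, h | h⟩
    · exact ⟨t, ht, i, j, h.1, h.2, rfl⟩
    · exact ⟨t, ht, j, i, h.1, h.2, Sym2.eq_swap⟩
  rcases x with i | i <;> rcases y with j | j <;> simp only [SimpleGraph.mem_edgeSet] at he
  · obtain ⟨t, ht, i', j', hi, hj, h⟩ := hpair i j (adj_inl_inl.mp he)
    refine Or.inr ⟨t, ht, i', j', hi, hj, Or.inl ?_⟩
    simpa [Sym2.eq_iff] using h
  · exact Or.inl ⟨i, j, rfl⟩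
  · exact Or.inl ⟨j, i, Sym2.eq_swap⟩
  · obtain ⟨t, ht, i', j', hi, hj, h⟩ := hpair i j (adj_inr_inr.mp he)
    refine Or.inr ⟨t, ht, i', j', hi, hj, Or.inr ?_⟩
    simpa [Sym2.eq_iff] using h

section LowerBound

open Classical in
noncomputable def crossPairs (D : Set (Sym2 (Fin n ⊕ Fin n))) : Finset (Fin n × Fin n) :=
  Finset.univ.filter fun p => s(inl p.1, inr p.2) ∈ D

theorem mem_crossPairs {D : Set (Sym2 (Fin n ⊕ Fin n))} {p : Fin n × Fin n} :
    p ∈ crossPairs D ↔ s(inl p.1, inr p.2) ∈ D := by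
  simp [crossPairs]

def nonCrossEdges (D : Set (Sym2 (Fin n ⊕ Fin n))) : Set (Sym2 (Fin n ⊕ Fin n)) :=
  {e ∈ D | ¬ ∃ a b, e = s(inl a, inr b)}

open Classical in
/-- Ordered pairs of cross edges `u_a v_b`, `u_c v_d` of `D` such that `u_a v_d` is a non-edge. -/
noncomputable def linkedPairs (k : ℕ) (D : Set (Sym2 (Fin n ⊕ Fin n))) :
    Finset ((Fin n × Fin n) × (Fin n × Fin n)) :=
  (crossPairs D ×ˢ crossPairs D).filter fun pq => pairIdx k pq.1.1 pq.2.2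

noncomputable def linkedBlocks (k : ℕ) (D : Set (Sym2 (Fin n ⊕ Fin n))) : Finset ℕ :=
  (linkedPairs k D).image fun pq => pq.1.1.val / 2

/-- The block `t` of a special edge `u_{2t} u_{2t+1}` or `v_{2t} v_{2t+1}`. -/
def edgeBlock : Sym2 (Fin n ⊕ Fin n) → ℕ :=
  Sym2.lift ⟨fun x y => min (Sum.elim Fin.val Fin.val x) (Sum.elim Fin.val Fin.val y) / 2,
    fun _ _ => by simp only [min_comm]⟩

variable {G : SimpleGraph (Fin n ⊕ Fin n)} {M S D : Set (Sym2 (Fin n ⊕ Fin n))}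

theorem crossPairs_injOn_fst (hM : IsPM G M) (hD : D ⊆ M) :
    Set.InjOn Prod.fst (crossPairs D : Set (Fin n × Fin n)) := by
  intro p hp q hq h
  have := hM.eq_of_mem_of_mem (hD (mem_crossPairs.mp hp)) (hD (mem_crossPairs.mp hq))
    (Sym2.mem_mk_left _ _) (h ▸ Sym2.mem_mk_left _ _)
  simp_all [Prod.ext_iff]

theorem crossPairs_injOn_snd (hM : IsPM G M) (hD : D ⊆ M) :
    Set.InjOn Prod.snd (crossPairs D : Set (Fin n × Fin n)) := by
  intro p hp q hq h
  have := hM.eq_of_mem_of_mem (hD (mem_crossPairs.mp hp)) (hD (mem_crossPairs.mp hq))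
    (Sym2.mem_mk_right _ _) (h ▸ Sym2.mem_mk_right _ _)
  simp_all [Prod.ext_iff]

theorem card_linkedPairs_le (hM : IsPM G M) (hD : D ⊆ M) :
    (linkedPairs k D).card ≤ 2 * (linkedBlocks k D).card := by
  classical
  have hinj : Set.InjOn (fun pq : (Fin n × Fin n) × (Fin n × Fin n) => pq.1.1.val)
      (linkedPairs k D : Set _) := by
    rintro ⟨p, q⟩ hpq ⟨p', q'⟩ hpq' (h : p.1.val = p'.1.val)
    simp only [linkedPairs, Finset.coe_filter, Finset.mem_product, pairIdx_iff,
      Set.mem_ofPred_eq] at hpq hpq'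
    have hp : p = p' := crossPairs_injOn_fst hM hD hpq.1.1 hpq'.1.1 (Fin.ext h)
    have hq : q = q' := crossPairs_injOn_snd hM hD hpq.1.2 hpq'.1.2 (Fin.ext (by omega))
    rw [hp, hq]
  have hblocks :
      linkedBlocks k D = ((linkedPairs k D).image fun pq => pq.1.1.val).image (· / 2) := by
    rw [Finset.image_image]; rfl
  rw [← Finset.card_image_of_injOn hinj, hblocks]
  exact Finset.card_le_two_mul_card_image_div_two _

theorem ncard_le_card_crossPairs_add_ncard (D : Set (Sym2 (Fin n ⊕ Fin n))) :
    D.ncard ≤ (crossPairs D).card + (nonCrossEdges D).ncard := by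
  classical
  have hsub : D ⊆ ↑((crossPairs D).image fun p => s(inl p.1, inr p.2)) ∪ nonCrossEdges D := by
    intro e he
    by_cases h : ∃ a b, e = s(inl a, inr b)
    · obtain ⟨a, b, rfl⟩ := h
      exact Or.inl (Finset.mem_image.mpr ⟨(a, b), mem_crossPairs.mpr he, rfl⟩)
    · exact Or.inr ⟨he, h⟩
  calc D.ncard ≤ _ := Set.ncard_le_ncard hsub
    _ ≤ _ := Set.ncard_union_le _ _
    _ ≤ _ := by rw [Set.ncard_coe_finset]; gcongr; exact Finset.card_image_le

/-- Two cross edges of `M \ S` that are not linked either way lie on an alternating 4-cycle. -/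
theorem card_mul_pred_le_linkedPairs (hM : IsPM (Hgraph n k) M)
    (hS : IsForcingSet (Hgraph n k) M S) :
    (crossPairs (M \ S)).card * ((crossPairs (M \ S)).card - 1) ≤
      2 * (linkedPairs k (M \ S)).card := by
  classical
  set P := crossPairs (M \ S)
  have hoff : P.offDiag ⊆ linkedPairs k (M \ S) ∪ (linkedPairs k (M \ S)).image Prod.swap := by
    rintro ⟨p, q⟩ hpq
    obtain ⟨hp, hq, hne⟩ := Finset.mem_offDiag.mp hpq
    simp only [linkedPairs, Finset.mem_union, Finset.mem_filter, Finset.mem_product,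
      Finset.mem_image, Prod.exists, Prod.swap_prod_mk, Prod.mk.injEq]
    by_contra! h
    refine hS.false_of_alternating_square hM (v₁ := inl p.1) (v₂ := inr p.2) (v₃ := inl q.1)
      (v₄ := inr q.2) (mem_crossPairs.mp hp) (mem_crossPairs.mp hq) ?_ ?_ ?_ ?_
    · simpa using fun h => hne (crossPairs_injOn_fst hM Set.sdiff_subset hp hq h)
    · simpa using fun h => hne (crossPairs_injOn_snd hM Set.sdiff_subset hp hq h)
    · simpa using Or.inr fun h' => h.2 q.1 q.2 p.1 p.2 ⟨⟨hq, hp⟩, h'⟩ rfl rfl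
    · simpa using Or.inr fun h' => h.1 ⟨hp, hq⟩ h'
  calc P.card * (P.card - 1) = P.offDiag.card := by rw [Finset.offDiag_card, Nat.mul_sub_one]
    _ ≤ (linkedPairs k (M \ S)).card + ((linkedPairs k (M \ S)).image Prod.swap).card :=
        (Finset.card_le_card hoff).trans (Finset.card_union_le _ _)
    _ ≤ 2 * (linkedPairs k (M \ S)).card := by
        have := Finset.card_image_le (s := linkedPairs k (M \ S)) (f := Prod.swap); omega

theorem exists_special_of_mem_nonCrossEdges (hM : IsPM (Hgraph n k) M)
    {e : Sym2 (Fin n ⊕ Fin n)} (he : e ∈ nonCrossEdges (M \ S)) :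
    ∃ t < k, ∃ i j : Fin n, i.val = 2 * t ∧ j.val = 2 * t + 1 ∧
      (e = s(inl i, inl j) ∨ e = s(inr i, inr j)) :=
  (edge_cases (hM.1 he.1.1)).resolve_left he.2

theorem edgeBlock_eq {t : ℕ} {i j : Fin n} (hi : i.val = 2 * t) (hj : j.val = 2 * t + 1)
    {e : Sym2 (Fin n ⊕ Fin n)} (he : e = s(inl i, inl j) ∨ e = s(inr i, inr j)) :
    edgeBlock e = t := by
  rcases he with rfl | rfl <;> simp [edgeBlock] <;> omega

/-- A special edge of `M \ S` in block `t` and a linked pair with `u_a` in block `t` would share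
a vertex. -/
theorem edgeBlock_not_mem_linkedBlocks (hM : IsPM (Hgraph n k) M) {e : Sym2 (Fin n ⊕ Fin n)}
    (he : e ∈ nonCrossEdges (M \ S)) :
    edgeBlock e ∉ linkedBlocks k (M \ S) := by
  obtain ⟨t, -, i, j, hi, hj, hij⟩ := exists_special_of_mem_nonCrossEdges hM he
  simp only [edgeBlock_eq hi hj hij, linkedBlocks, linkedPairs, Finset.mem_image,
    Finset.mem_filter, Finset.mem_product, mem_crossPairs, pairIdx_iff, not_exists, not_and]
  rintro ⟨⟨a, b⟩, ⟨c, d⟩⟩ ⟨⟨hab, hcd⟩, had, -, -⟩ rfl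
  dsimp only at hab hcd had hi hj
  rcases hij with rfl | rfl
  · have hae : (inl a : Fin n ⊕ Fin n) ∈ s(inl i, inl j) := by
      simp [Sym2.mem_iff, Fin.ext_iff]; omega
    have := hM.eq_of_mem_of_mem he.1.1 hab.1 hae (Sym2.mem_mk_left _ _)
    simp at this
  · have hde : (inr d : Fin n ⊕ Fin n) ∈ s(inr i, inr j) := by
      simp [Sym2.mem_iff, Fin.ext_iff]; omega
    have := hM.eq_of_mem_of_mem he.1.1 hcd.1 hde (Sym2.mem_mk_right _ _)
    simp at this

/-- The two special edges of a block would lie on an alternating 4-cycle. -/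
theorem injOn_edgeBlock (hM : IsPM (Hgraph n k) M) (hS : IsForcingSet (Hgraph n k) M S) :
    Set.InjOn edgeBlock (nonCrossEdges (M \ S)) := by
  intro e he e' he' h
  obtain ⟨t, -, i, j, hi, hj, hij⟩ := exists_special_of_mem_nonCrossEdges hM he
  obtain ⟨t', -, i', j', hi', hj', hij'⟩ := exists_special_of_mem_nonCrossEdges hM he'
  rw [edgeBlock_eq hi hj hij, edgeBlock_eq hi' hj' hij'] at h
  obtain rfl : i = i' := Fin.ext (by omega)
  obtain rfl : j = j' := Fin.ext (by omega)
  have square : s(inl i, inl j) ∈ M \ S → s(inr i, inr j) ∈ M \ S → False := fun hl hr =>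
    hS.false_of_alternating_square hM (v₃ := inr j) (v₄ := inr i) hl (Sym2.eq_swap ▸ hr)
      (by simp) (by simp) (by simp) (by simp)
  rcases hij with rfl | rfl <;> rcases hij' with rfl | rfl
  exacts [rfl, (square he.1 he'.1).elim, (square he'.1 he.1).elim, rfl]

theorem ncard_nonCrossEdges_add_card_linkedBlocks_le (hM : IsPM (Hgraph n k) M)
    (hS : IsForcingSet (Hgraph n k) M S) :
    (nonCrossEdges (M \ S)).ncard + (linkedBlocks k (M \ S)).card ≤ k := by
  classical
  have hF : linkedBlocks k (M \ S) ⊆ Finset.range k := by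
    simp only [Finset.subset_iff, linkedBlocks, linkedPairs, Finset.mem_image, Finset.mem_filter,
      pairIdx_iff, Finset.mem_range]
    rintro _ ⟨_, ⟨-, -, -, h⟩, rfl⟩
    omega
  have hmaps : ∀ e ∈ nonCrossEdges (M \ S),
      edgeBlock e ∈ (↑(Finset.range k \ linkedBlocks k (M \ S)) : Set ℕ) := by
    intro e he
    obtain ⟨t, ht, i, j, hi, hj, hij⟩ := exists_special_of_mem_nonCrossEdges hM he
    have := edgeBlock_not_mem_linkedBlocks hM he
    rw [edgeBlock_eq hi hj hij] at this ⊢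
    simpa [ht] using this
  have := Set.ncard_le_ncard_of_injOn edgeBlock hmaps (injOn_edgeBlock hM hS)
  rw [Set.ncard_coe_finset, Finset.card_sdiff_of_subset hF, Finset.card_range] at this
  have := Finset.card_le_card hF
  simp only [Finset.card_range] at this
  omega

theorem ncard_sdiff_le (hM : IsPM (Hgraph n k) M) (hS : IsForcingSet (Hgraph n k) M S) :
    (M \ S).ncard ≤ k + 1 := by
  have hcross := card_mul_pred_le_linkedPairs hM hS
  have hlinked := card_linkedPairs_le (k := k) hM (Set.sdiff_subset (t := S))
  have hspecial := ncard_nonCrossEdges_add_card_linkedBlocks_le hM hS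
  have hsplit := ncard_le_card_crossPairs_add_ncard (M \ S)
  set p := (crossPairs (M \ S)).card
  set f := (linkedBlocks k (M \ S)).card
  have hp : p ≤ f + 1 := by
    by_contra! h
    obtain ⟨m, hm⟩ := Nat.exists_eq_add_of_lt h
    rw [hm, show f + 1 + m + 1 - 1 = f + 1 + m by omega] at hcross
    nlinarith [sq_nonneg ((f : ℤ) - 1)]
  omega

theorem sub_le_ncard_of_isForcingSet (hM : IsPM (Hgraph n k) M)
    (hS : IsForcingSet (Hgraph n k) M S) : n - k - 1 ≤ S.ncard := by
  have hMcard := hM.card_le_two_mul_ncard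
  rw [Fintype.card_sum, Fintype.card_fin] at hMcard
  have := Set.ncard_le_ncard_sdiff_add_ncard M S
  have := ncard_sdiff_le hM hS
  omega

end LowerBound

section UpperBound

def forcingIndex (k : ℕ) (t : Fin (n - k - 1)) : Fin n :=
  ⟨if t.val < k then 2 * t.val else t.val + k, by split <;> omega⟩

variable (h : 2 * k < n)

def blockPartner (i : Fin n) : Fin n :=
  if hi : i.val < 2 * k then ⟨if i.val % 2 = 0 then i.val + 1 else i.val - 1, by split <;> omega⟩
  else i

theorem pairIdx_iff_eq_blockPartner {i j : Fin n} :
    pairIdx k i j ↔ i.val < 2 * k ∧ j = blockPartner h i := by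
  rw [pairIdx_iff, blockPartner]
  split_ifs <;> simp only [Fin.ext_iff] <;> omega

theorem pairIdx_blockPartner_self {i : Fin n} (hi : i.val < 2 * k) :
    pairIdx k (blockPartner h i) i :=
  pairIdx_comm.mp ((pairIdx_iff_eq_blockPartner h).mpr ⟨hi, rfl⟩)

theorem blockPartner_lt {i : Fin n} (hi : i.val < 2 * k) : (blockPartner h i).val < 2 * k :=
  ((pairIdx_iff_eq_blockPartner h).mp (pairIdx_blockPartner_self h hi)).1

theorem blockPartner_blockPartner {i : Fin n} (hi : i.val < 2 * k) :
    blockPartner h (blockPartner h i) = i :=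
  ((pairIdx_iff_eq_blockPartner h).mp (pairIdx_blockPartner_self h hi)).2.symm

def mate : Fin n ⊕ Fin n → Fin n ⊕ Fin n
  | inl i => if i.val < 2 * k then inl (blockPartner h i) else inr i
  | inr i => if i.val < 2 * k then inr (blockPartner h i) else inl i

theorem mate_involutive : Function.Involutive (mate h) := by
  rintro (i | i) <;> by_cases hi : i.val < 2 * k <;>
    simp [mate, hi, blockPartner_lt h, blockPartner_blockPartner h]

theorem adj_mate (v : Fin n ⊕ Fin n) : (Hgraph n k).Adj v (mate h v) := by
  rcases v with i | i <;> by_cases hi : i.val < 2 * k <;>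
    simp [mate, hi, pairIdx_iff_eq_blockPartner h]

def matching : Set (Sym2 (Fin n ⊕ Fin n)) := Set.range fun v => s(v, mate h v)

theorem isPM_matching : IsPM (Hgraph n k) (matching h) :=
  isPM_range_of_involutive (mate_involutive h) (adj_mate h)

/-- The edges of `matching` at `u_0, …, u_{n-2}`. -/
def forcingSet : Set (Sym2 (Fin n ⊕ Fin n)) :=
  Set.range fun t => s(inl (forcingIndex k t), mate h (inl (forcingIndex k t)))

theorem ncard_forcingSet_le : (forcingSet h).ncard ≤ n - k - 1 := by
  rw [forcingSet, ← Set.image_univ]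
  refine (Set.ncard_image_le (Set.toFinite _)).trans ?_
  rw [Set.ncard_univ, Nat.card_eq_fintype_card, Fintype.card_fin]

theorem mk_inl_mem_forcingSet {a : Fin n} (ha : a.val + 1 < n) :
    s(inl a, mate h (inl a)) ∈ forcingSet h := by
  suffices ∃ t, inl (forcingIndex k t) = inl a ∨ inl (forcingIndex k t) = mate h (inl a) by
    obtain ⟨t, ht | ht⟩ := this
    · exact ⟨t, by dsimp only; rw [ht]⟩
    · exact ⟨t, by dsimp only; rw [ht, mate_involutive h, Sym2.eq_swap]⟩
  by_cases hak : a.val < 2 * k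
  · refine ⟨⟨a.val / 2, by omega⟩, ?_⟩
    simp only [forcingIndex, mate, hak, blockPartner, inl.injEq, Fin.ext_iff, ↓reduceIte,
      ↓reduceDIte]
    split_ifs <;> omega
  · refine ⟨⟨a.val - k, by omega⟩, Or.inl ?_⟩
    simp only [forcingIndex, inl.injEq, Fin.ext_iff]
    split_ifs <;> omega

variable {M : Set (Sym2 (Fin n ⊕ Fin n))}

theorem inr_mem_mk_inl_mate_iff {a b : Fin n} :
    inr b ∈ s(inl a, mate h (inl a)) ↔ a = b ∧ 2 * k ≤ a.val := by
  simp only [mate, Sym2.mem_iff]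
  split_ifs <;> simp [eq_comm] <;> omega

/-- `v_{n-1}` has no neighbour but `u_{n-1}` outside the vertices matched by `forcingSet`. -/
theorem mk_inl_mate_mem (hM : IsPM (Hgraph n k) M) (hS : forcingSet h ⊆ M) (a : Fin n) :
    s(inl a, mate h (inl a)) ∈ M := by
  by_cases ha : a.val + 1 < n
  · exact hS (mk_inl_mem_forcingSet h ha)
  have hak : ¬ a.val < 2 * k := by omega
  simp only [mate, hak, if_false]
  rw [Sym2.eq_swap]
  refine hM.mk_mem_of_forall_adj hS fun z hz hza => ?_
  rcases z with b | j
  · have hba : b ≠ a := fun hba => hza (congrArg inl hba)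
    have hb : b.val + 1 < n := by rw [Ne, Fin.ext_iff] at hba; omega
    exact ⟨_, mk_inl_mem_forcingSet h hb, Sym2.mem_mk_left _ _,
      fun hmem => hba ((inr_mem_mk_inl_mate_iff h).mp hmem).1⟩
  · simp only [adj_inr_inr, pairIdx_iff] at hz
    omega

theorem mk_inr_mate_mem (hM : IsPM (Hgraph n k) M) (hS : forcingSet h ⊆ M) (b : Fin n) :
    s(inr b, mate h (inr b)) ∈ M := by
  by_cases hb : b.val < 2 * k
  · refine hM.mk_mem_of_forall_adj (N := Set.range fun a => s(inl a, mate h (inl a)))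
      (by rintro _ ⟨a, rfl⟩; exact mk_inl_mate_mem h hM hS a) fun z hz hzy => ?_
    rcases z with c | j
    · refine ⟨_, ⟨c, rfl⟩, Sym2.mem_mk_left _ _, fun hmem => ?_⟩
      obtain ⟨rfl, hc⟩ := (inr_mem_mk_inl_mate_iff h).mp hmem
      omega
    · simp only [adj_inr_inr, pairIdx_iff_eq_blockPartner h] at hz
      simp [mate, hb, hz.2] at hzy
  · have := mk_inl_mate_mem h hM hS b
    simp only [mate, hb, if_false] at this ⊢
    rwa [Sym2.eq_swap]

theorem isForcingSet_forcingSet : IsForcingSet (Hgraph n k) (matching h) (forcingSet h) := by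
  refine ⟨?_, fun M hM hS => (isPM_matching h).eq_of_subset hM ?_⟩
  · rintro _ ⟨t, rfl⟩
    exact ⟨_, rfl⟩
  · rintro _ ⟨a | b, rfl⟩
    exacts [mk_inl_mate_mem h hM hS a, mk_inr_mate_mem h hM hS b]

end UpperBound

theorem exists_isForcingSet_ncard_le (h : 2 * k < n) :
    ∃ M S, IsPM (Hgraph n k) M ∧ IsForcingSet (Hgraph n k) M S ∧ S.ncard ≤ n - k - 1 :=
  ⟨_, _, isPM_matching h, isForcingSet_forcingSet h, ncard_forcingSet_le h⟩

end Hgraph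

/-- Lemma 5.6. -/
theorem stmt13 (n k : ℕ) (hn : 1 ≤ n) (hk : k ≤ (n - 1) / 2) :
    minForcing (Hgraph n k) = n - k - 1 := by
  obtain ⟨M, S, hM, hS, hcard⟩ := Hgraph.exists_isForcingSet_ncard_le (show 2 * k < n by omega)
  exact le_antisymm ((minForcing_le hM hS).trans hcard)
    (le_minForcing ⟨M, hM⟩ fun _ _ => Hgraph.sub_le_ncard_of_isForcingSet)
end

section
/- Let M be a perfect matching of a finite simple graph G, and suppose M is partitioned into two disjoint nonempty subsets M_1 and M_2. Let G_1 = G[V(M_1)] and G_2 = G[V(M_2)] be the subgraphs of G induced by the sets of endpoints of M_1 and of M_2, respectively (so M_i is a perfect matching of G_i). Then f(G,M) ≥ f(G_1,M_1) + f(G_2,M_2). -/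
open SimpleGraph

lemma aux_restrict {V : Type*} (G : SimpleGraph V)
    (M M1 M2 S : Set (Sym2 V)) (hM : IsPM G M)
    (hunion : M = M1 ∪ M2) (hdisj : Disjoint M1 M2)
    (hS : IsForcingSet G M S) :
    ∀ M', IsPMOn G {w | ∃ e ∈ M1, w ∈ e} M' → S ∩ M1 ⊆ M' → M' = M1 := by
  intro M' hM' hSM'
  set T1 : Set V := {w | ∃ e ∈ M1, w ∈ e} with hT1
  have hdisjT : ∀ v : V, v ∈ T1 → ¬ (∃ f ∈ M2, v ∈ f) := by
    rintro v ⟨e, he1, hve⟩ ⟨f, hf2, hvf⟩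
    have hef : e ≠ f := by
      rintro rfl; exact Set.disjoint_left.mp hdisj he1 hf2
    exact hM.2.1 e (hunion ▸ Or.inl he1) f (hunion ▸ Or.inr hf2) hef v hve hvf
  have key : IsPM G (M' ∪ M2) := by
    refine ⟨?_, ?_, ?_⟩
    · rintro e (he | he)
      · exact hM'.1 he
      · exact hM.1 (hunion ▸ Or.inr he)
    · rintro e (he | he) f (hf | hf) hef v hve hvf
      · exact hM'.2.2.1 e he f hf hef v hve hvf
      · exact hdisjT v (hM'.2.1 e he v hve) ⟨f, hf, hvf⟩
      · exact hdisjT v (hM'.2.1 f hf v hvf) ⟨e, he, hve⟩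
      · exact hM.2.1 e (hunion ▸ Or.inr he) f (hunion ▸ Or.inr hf) hef v hve hvf
    · intro v
      obtain ⟨e, heM, hve⟩ := hM.2.2 v
      rw [hunion] at heM
      rcases heM with he1 | he2
      · obtain ⟨f, hf, hvf⟩ := hM'.2.2.2 v ⟨e, he1, hve⟩
        exact ⟨f, Or.inl hf, hvf⟩
      · exact ⟨e, Or.inr he2, hve⟩
  have hSsub : S ⊆ M' ∪ M2 := by
    intro s hs
    have := hS.1 hs
    rw [hunion] at this
    rcases this with h | h
    · exact Or.inl (hSM' ⟨hs, h⟩)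
    · exact Or.inr h
  have hEq : M' ∪ M2 = M := hS.2 _ key hSsub
  ext e
  constructor
  · intro he
    have heM : e ∈ M := hEq ▸ Or.inl he
    rw [hunion] at heM
    rcases heM with h | h
    · exact h
    · exfalso
      induction e using Sym2.ind with
      | _ a b =>
        exact hdisjT a (hM'.2.1 _ he a (by simp)) ⟨_, h, by simp⟩
  · intro he
    induction e using Sym2.ind with
    | _ a b =>
      have haT : a ∈ T1 := ⟨_, he, by simp⟩
      obtain ⟨f, hf, haf⟩ := hM'.2.2.2 a haT
      have hfM : f ∈ M := hEq ▸ Or.inl hf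
      have heM : s(a, b) ∈ M := hunion ▸ Or.inl he
      by_cases hef : s(a, b) = f
      · exact hef ▸ hf
      · exact absurd haf (hM.2.1 _ heM f hfM hef a (by simp))

/-- Fact 5.5. -/
theorem stmt17 {V : Type*} [Fintype V] (G : SimpleGraph V)
    (M M1 M2 : Set (Sym2 V)) (hM : IsPM G M)
    (hunion : M = M1 ∪ M2) (hdisj : Disjoint M1 M2)
    (h1 : M1.Nonempty) (h2 : M2.Nonempty) :
    forcingNumOn G {w | ∃ e ∈ M1, w ∈ e} M1 +
        forcingNumOn G {w | ∃ e ∈ M2, w ∈ e} M2 ≤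
      forcingNum G M := by
  -- M itself is a forcing set, so the infimum is attained
  have hMforce : IsForcingSet G M M := by
    refine ⟨subset_rfl, fun M' hM' hsub => ?_⟩
    ext e
    refine ⟨fun he => ?_, fun he => hsub he⟩
    induction e using Sym2.ind with
    | _ a b =>
      obtain ⟨f, hf, haf⟩ := hM.2.2 a
      by_cases hef : s(a, b) = f
      · exact hef ▸ hf
      · exact absurd haf (hM'.2.1 _ he f (hsub hf) hef a (by simp))
  have hne : forcingNum G M ∈ {k | ∃ S, IsForcingSet G M S ∧ S.ncard = k} :=
    Nat.sInf_mem ⟨M.ncard, M, hMforce, rfl⟩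
  obtain ⟨S, hS, hScard⟩ := hne
  have h1le : forcingNumOn G {w | ∃ e ∈ M1, w ∈ e} M1 ≤ (S ∩ M1).ncard :=
    Nat.sInf_le ⟨S ∩ M1, Set.inter_subset_right,
      aux_restrict G M M1 M2 S hM hunion hdisj hS, rfl⟩
  have h2le : forcingNumOn G {w | ∃ e ∈ M2, w ∈ e} M2 ≤ (S ∩ M2).ncard :=
    Nat.sInf_le ⟨S ∩ M2, Set.inter_subset_right,
      aux_restrict G M M2 M1 S hM (by rw [hunion, Set.union_comm]) hdisj.symm hS, rfl⟩
  have hsplit : S = (S ∩ M1) ∪ (S ∩ M2) := by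
    rw [← Set.inter_union_distrib_left, ← hunion]
    exact (Set.inter_eq_left.mpr hS.1).symm
  have hcard : (S ∩ M1).ncard + (S ∩ M2).ncard = S.ncard := by
    rw [hsplit, Set.ncard_union_eq
      (hdisj.mono Set.inter_subset_right Set.inter_subset_right)
      (Set.toFinite _) (Set.toFinite _)]
    rw [← hsplit]
  omega
end

section
/- Let G ∈ 𝒢_{2n} and let M_s be a perfect matching of G with f(G,M_s) = n−1. Then every perfect matching M of G can be transformed into M_s by a finite sequence of matching 2-switches; that is, there exist perfect matchings M = M_1, M_2, …, M_r = M_s of G such that for each 1 ≤ i ≤ r−1 there is an M_i-alternating 4-cycle C_i in G with M_{i+1} = M_i ⊕ E(C_i). -/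
open SimpleGraph

/-!
Let `q` be the partner map of `Ms`. Since `f(G, Ms) = n - 1`, removing two edges `x q(x)` and
`y q(y)` from `Ms` leaves a set that does not force `Ms`, so another perfect matching agrees
with `Ms` off these four vertices and must rematch them: every two edges of `Ms` lie on an
`Ms`-alternating 4-cycle. For `M ≠ Ms`, follow the `Ms`/`M`-alternating cycle
`a₀, q a₀, a₁, q a₁, …`. Applying the 4-cycles to pairs among five consecutive `Ms`-edges of
this cycle, either one 2-switch or two 2-switches along a chorded alternating hexagon give a
perfect matching that keeps every edge of `M ∩ Ms` and gains a new edge of `Ms`; induction on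
`|Ms \ M|` concludes.
-/

open Function

theorem Set.sdiff_ssubset_sdiff_of_subset_union {α : Type*} {S M M' R A : Set α} {e : α}
    (hsub : M \ R ∪ A ⊆ M') (hR : ∀ f ∈ R, f ∉ S) (heA : e ∈ A) (heS : e ∈ S) (heM : e ∉ M) :
    S \ M' ⊂ S \ M := by
  refine ssubset_of_subset_not_superset (fun f ⟨hfS, hfM'⟩ => ⟨hfS, fun hfM => ?_⟩)
    (fun h => (h ⟨heS, heM⟩).2 (hsub (.inr heA)))
  exact hfM' (hsub (.inl ⟨hfM, fun hfR => hR f hfR hfS⟩))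

theorem Relation.ReflTransGen.exists_fin_chain {α : Type*} {r : α → α → Prop} {a b : α}
    (h : Relation.ReflTransGen r a b) : ∃ (n : ℕ) (f : Fin (n + 1) → α),
      f 0 = a ∧ f (Fin.last n) = b ∧ ∀ i : Fin n, r (f i.castSucc) (f i.succ) := by
  induction h using Relation.ReflTransGen.head_induction_on with
  | refl => exact ⟨0, fun _ => b, rfl, rfl, fun i => i.elim0⟩
  | head hac _ ih =>
    obtain ⟨n, f, h₀, hn, hf⟩ := ih
    refine ⟨n + 1, Fin.cons _ f, rfl, by simpa [← Fin.succ_last] using hn, Fin.cases ?_ hf⟩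
    simpa [h₀] using hac

theorem Function.Involutive.rematch_of_eqOn_compl {α : Type*} {r q : α → α}
    (hr : Involutive r) (hq : Involutive q) (hr₀ : ∀ v, r v ≠ v) {x y : α}
    (heq : Set.EqOn r q {x, q x, y, q y}ᶜ) (hne : r ≠ q) :
    (r x = y ∧ r (q x) = q y) ∨ (r x = q y ∧ r (q x) = y) := by
  have hclosed : ∀ v ∈ ({x, q x, y, q y} : Set α), r v ∈ ({x, q x, y, q y} : Set α) := by
    intro v hv
    by_contra h
    have := heq h
    rw [hr v] at this
    simp only [Set.mem_insert_iff, Set.mem_singleton_iff] at hv h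
    grind [Involutive]
  have hx := hclosed x (by simp)
  have hqx := hclosed (q x) (by simp)
  have hy := hclosed y (by simp)
  have hqy := hclosed (q y) (by simp)
  simp only [Set.mem_insert_iff, Set.mem_singleton_iff] at hx hqx hy hqy
  -- if `r` matched `x` with `q x`, it would agree with `q` on the four vertices as well
  by_contra hc
  refine hne (funext fun v => ?_)
  by_cases hv : v = x ∨ v = q x ∨ v = y ∨ v = q y
  · grind [Involutive]
  · exact heq (by simpa using hv)

section

variable {V : Type*} {G : SimpleGraph V}

def IsPartner (M : Set (Sym2 V)) (p : V → V) : Prop :=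
  ∀ v w, s(v, w) ∈ M ↔ w = p v

namespace IsPartner

variable {M : Set (Sym2 V)} {p : V → V}

theorem mem_iff (hp : IsPartner M p) {v w : V} : s(v, w) ∈ M ↔ w = p v := hp v w

theorem mem (hp : IsPartner M p) (v : V) : s(v, p v) ∈ M := (hp v _).2 rfl

theorem apply_eq (hp : IsPartner M p) {v w : V} (h : s(v, w) ∈ M) : p v = w :=
  ((hp v w).1 h).symm

theorem involutive (hp : IsPartner M p) : Involutive p := fun v =>
  hp.apply_eq (Sym2.eq_swap ▸ hp.mem v)

theorem eq_of_isPartner {M' : Set (Sym2 V)} (hp : IsPartner M p) (hp' : IsPartner M' p) :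
    M = M' := by
  ext e
  induction e using Sym2.ind with
  | _ v w => rw [hp, hp']

end IsPartner

theorem isPM_iff_exists_isPartner {M : Set (Sym2 V)} :
    IsPM G M ↔ ∃ p, IsPartner M p ∧ ∀ v, G.Adj v (p v) := by
  constructor
  · rintro ⟨hsub, hdisj, hcov⟩
    have key : ∀ v, ∃ w, (∀ u, s(v, u) ∈ M ↔ u = w) ∧ G.Adj v w := by
      intro v
      obtain ⟨e, he, hve⟩ := hcov v
      obtain ⟨w, rfl⟩ := (Sym2.mem_iff_exists.mp hve).imp fun _ h => h.symm
      refine ⟨w, fun u => ⟨fun hu => ?_, fun hu => hu ▸ he⟩, hsub he⟩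
      by_contra hne
      exact hdisj _ hu _ he (fun h => hne (Sym2.congr_right.mp h)) v (by simp) (by simp)
    choose p hp hadj using key
    exact ⟨p, hp, hadj⟩
  · rintro ⟨p, hp, hadj⟩
    refine ⟨?_, ?_, fun v => ⟨_, hp.mem v, Sym2.mem_mk_left _ _⟩⟩
    · rintro ⟨v, w⟩ he
      exact hp.apply_eq he ▸ hadj v
    · rintro e he f hf hne v hve hvf
      obtain ⟨w, rfl⟩ := (Sym2.mem_iff_exists.mp hve).imp fun _ h => h.symm
      obtain ⟨u, rfl⟩ := (Sym2.mem_iff_exists.mp hvf).imp fun _ h => h.symm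
      exact hne (by rw [← hp.apply_eq he, ← hp.apply_eq hf])

theorem IsPM.exists_isPartner {M : Set (Sym2 V)} (hM : IsPM G M) :
    ∃ p, IsPartner M p ∧ ∀ v, G.Adj v (p v) :=
  isPM_iff_exists_isPartner.1 hM

theorem IsPM.two_mul_ncard [Fintype V] {M : Set (Sym2 V)} (hM : IsPM G M) :
    2 * M.ncard = Fintype.card V := by
  classical
  have hfin := M.toFinite
  have huniv : (Finset.univ : Finset V) = hfin.toFinset.biUnion (fun e => e.toFinset) := by
    ext v
    simpa using hM.2.2 v
  have hdisj : (hfin.toFinset : Set (Sym2 V)).PairwiseDisjoint (fun e => e.toFinset) := by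
    intro e he f hf hef
    simp only [Finset.disjoint_left, Sym2.mem_toFinset]
    exact hM.2.1 e (by simpa using he) f (by simpa using hf) hef
  rw [Set.ncard_eq_toFinset_card _ hfin, ← Finset.card_univ, huniv, Finset.card_biUnion hdisj,
    Finset.sum_congr rfl fun e he => Sym2.card_toFinset_of_not_isDiag e
      (G.not_isDiag_of_mem_edgeSet (hM.1 (by simpa using he))), Finset.sum_const, smul_eq_mul,
    mul_comm]

def IsSwitch (G : SimpleGraph V) (M M' : Set (Sym2 V)) : Prop :=
  ∃ a b c d : V, a ≠ b ∧ a ≠ c ∧ a ≠ d ∧ b ≠ c ∧ b ≠ d ∧ c ≠ d ∧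
    G.Adj a b ∧ G.Adj b c ∧ G.Adj c d ∧ G.Adj d a ∧
    s(a, b) ∈ M ∧ s(c, d) ∈ M ∧ s(b, c) ∉ M ∧ s(d, a) ∉ M ∧
    M' = symmDiff M {s(a, b), s(b, c), s(c, d), s(d, a)}

section Switch

variable {M : Set (Sym2 V)} {a b c d : V}

theorem IsPM.symmDiff_square (hM : IsPM G M) (hab : s(a, b) ∈ M) (hcd : s(c, d) ∈ M)
    (hne : s(a, b) ≠ s(c, d)) (hbc : G.Adj b c) (hda : G.Adj d a) :
    IsPM G (symmDiff M {s(a, b), s(b, c), s(c, d), s(d, a)}) := by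
  classical
  obtain ⟨p, hp, hadj⟩ := hM.exists_isPartner
  have := hp.apply_eq hab
  have := hp.apply_eq hcd
  have := hp.involutive
  refine isPM_iff_exists_isPartner.2 ⟨fun v => if v = a then d else if v = d then a else
    if v = b then c else if v = c then b else p v, fun v w => ?_, fun v => ?_⟩
  · rw [Set.mem_symmDiff, hp.mem_iff]
    simp only [Set.mem_insert_iff, Set.mem_singleton_iff, Sym2.eq_iff]
    grind [Involutive, SimpleGraph.Adj.ne]
  · grind [Involutive, SimpleGraph.Adj.symm]

theorem IsPM.isSwitch_square (hM : IsPM G M) (hab : s(a, b) ∈ M) (hcd : s(c, d) ∈ M)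
    (hne : s(a, b) ≠ s(c, d)) (hbc : G.Adj b c) (hda : G.Adj d a) :
    IsSwitch G M (symmDiff M {s(a, b), s(b, c), s(c, d), s(d, a)}) := by
  obtain ⟨p, hp, hadj⟩ := hM.exists_isPartner
  have := hp.apply_eq hab
  have := hp.apply_eq hcd
  have := hp.involutive
  refine ⟨a, b, c, d, ?_, ?_, ?_, ?_, ?_, ?_, hM.1 hab, hbc, hM.1 hcd, hda, hab, hcd, ?_, ?_,
    rfl⟩ <;> simp only [hp.mem_iff, ne_eq] <;> grind [Involutive, Sym2.eq_iff, SimpleGraph.Adj.ne]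

theorem IsSwitch.isPM {M' : Set (Sym2 V)} (h : IsSwitch G M M') (hM : IsPM G M) :
    IsPM G M' := by
  obtain ⟨a, b, c, d, -, hac, had, -, -, -, -, hbc, -, hda, hab, hcd, -, -, rfl⟩ := h
  exact hM.symmDiff_square hab hcd (by simp [hac, had]) hbc hda

theorem IsPM.of_reflTransGen_isSwitch {M' : Set (Sym2 V)} (hM : IsPM G M)
    (h : Relation.ReflTransGen (IsSwitch G) M M') : IsPM G M' := by
  induction h with
  | refl => exact hM
  | tail _ hs ih => exact hs.isPM ih

theorem IsPM.subset_symmDiff_square (hM : IsPM G M) (hab : s(a, b) ∈ M) (hcd : s(c, d) ∈ M)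
    (hne : s(a, b) ≠ s(c, d)) :
    M \ {s(a, b), s(c, d)} ∪ {s(b, c), s(d, a)} ⊆
      symmDiff M {s(a, b), s(b, c), s(c, d), s(d, a)} := by
  obtain ⟨p, hp, hadj⟩ := hM.exists_isPartner
  have := hp.apply_eq hab
  have := hp.apply_eq hcd
  have := hp.involutive
  intro e
  induction e using Sym2.ind with | _ v w => ?_
  simp only [Set.mem_union, Set.mem_sdiff, Set.mem_symmDiff, Set.mem_insert_iff,
    Set.mem_singleton_iff, hp.mem_iff]
  grind [Involutive, Sym2.eq_iff, SimpleGraph.Adj.ne]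

theorem IsPM.exists_reach_square (hM : IsPM G M) (hab : s(a, b) ∈ M) (hcd : s(c, d) ∈ M)
    (hne : s(a, b) ≠ s(c, d)) (hbc : G.Adj b c) (hda : G.Adj d a) :
    ∃ M', Relation.ReflTransGen (IsSwitch G) M M' ∧
      M \ {s(a, b), s(c, d)} ∪ {s(b, c), s(d, a)} ⊆ M' :=
  ⟨_, .single (hM.isSwitch_square hab hcd hne hbc hda), hM.subset_symmDiff_square hab hcd hne⟩

/-- The chord `u₄u₁` splits the `M`-alternating hexagon `u₁ … u₆` into two alternating squares. -/
theorem IsPM.exists_reach_hexagon (hM : IsPM G M) {u₁ u₂ u₃ u₄ u₅ u₆ : V}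
    (h₁₂ : s(u₁, u₂) ∈ M) (h₃₄ : s(u₃, u₄) ∈ M) (h₅₆ : s(u₅, u₆) ∈ M)
    (hne₁₃ : s(u₁, u₂) ≠ s(u₃, u₄)) (hne₁₅ : s(u₁, u₂) ≠ s(u₅, u₆))
    (hne₃₅ : s(u₃, u₄) ≠ s(u₅, u₆)) (h₂₃ : G.Adj u₂ u₃) (h₄₅ : G.Adj u₄ u₅)
    (h₆₁ : G.Adj u₆ u₁) (h₄₁ : G.Adj u₄ u₁) :
    ∃ M', Relation.ReflTransGen (IsSwitch G) M M' ∧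
      M \ {s(u₁, u₂), s(u₃, u₄), s(u₅, u₆)} ∪ {s(u₂, u₃), s(u₄, u₅), s(u₆, u₁)} ⊆ M' := by
  obtain ⟨p, hp, hadj⟩ := hM.exists_isPartner
  have := hp.apply_eq h₁₂
  have := hp.apply_eq h₃₄
  have := hp.apply_eq h₅₆
  have := hp.involutive
  set M₁ := symmDiff M {s(u₁, u₂), s(u₂, u₃), s(u₃, u₄), s(u₄, u₁)}
  have hM₁ : M \ {s(u₁, u₂), s(u₃, u₄)} ∪ {s(u₂, u₃), s(u₄, u₁)} ⊆ M₁ :=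
    hM.subset_symmDiff_square h₁₂ h₃₄ hne₁₃
  have h₁₄ : s(u₁, u₄) ∈ M₁ := hM₁ (.inr (by simp [Sym2.eq_swap]))
  have h₅₆' : s(u₅, u₆) ∈ M₁ := hM₁ (.inl ⟨h₅₆, by simp [hne₁₅.symm, hne₃₅.symm]⟩)
  have hne : s(u₁, u₄) ≠ s(u₅, u₆) := by grind [Involutive, Sym2.eq_iff, SimpleGraph.Adj.ne]
  have hsub : M \ {s(u₁, u₂), s(u₃, u₄), s(u₅, u₆)} ∪ {s(u₂, u₃), s(u₄, u₅), s(u₆, u₁)} ⊆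
      M₁ \ {s(u₁, u₄), s(u₅, u₆)} ∪ {s(u₄, u₅), s(u₆, u₁)} := by
    intro e
    induction e using Sym2.ind with | _ v w => ?_
    simp only [M₁, Set.mem_union, Set.mem_sdiff, Set.mem_symmDiff, Set.mem_insert_iff,
      Set.mem_singleton_iff, hp.mem_iff]
    grind [Involutive, Sym2.eq_iff, SimpleGraph.Adj.ne]
  have hs₁ := hM.isSwitch_square h₁₂ h₃₄ hne₁₃ h₂₃ h₄₁
  obtain ⟨M₂, hM₁₂, hM₂⟩ := (hs₁.isPM hM).exists_reach_square h₁₄ h₅₆' hne h₄₅ h₆₁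
  exact ⟨M₂, .head hs₁ hM₁₂, hsub.trans hM₂⟩

end Switch

def PairwiseAlternatingSquares (G : SimpleGraph V) (M : Set (Sym2 V)) : Prop :=
  ∀ x x' y y', s(x, x') ∈ M → s(y, y') ∈ M → s(x, x') ≠ s(y, y') →
    (G.Adj x y ∧ G.Adj x' y') ∨ (G.Adj x y' ∧ G.Adj x' y)

theorem exists_isPM_ne_of_forcingNum [Fintype V] {n : ℕ} {Ms : Set (Sym2 V)}
    (hcard : Fintype.card V = 2 * n) (hMs : IsPM G Ms) (hf : forcingNum G Ms = n - 1)
    {e f : Sym2 V} (he : e ∈ Ms) (hf' : f ∈ Ms) (hef : e ≠ f) :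
    ∃ M', IsPM G M' ∧ Ms \ {e, f} ⊆ M' ∧ M' ≠ Ms := by
  by_contra! h
  have hforcing : IsForcingSet G Ms (Ms \ {e, f}) := ⟨Set.sdiff_subset, h⟩
  have hpair : {e, f} ⊆ Ms := Set.insert_subset he (Set.singleton_subset_iff.2 hf')
  have hle : forcingNum G Ms ≤ (Ms \ {e, f}).ncard := Nat.sInf_le ⟨_, hforcing, rfl⟩
  have htwo := Set.ncard_le_ncard hpair
  rw [Set.ncard_sdiff hpair, Set.ncard_pair hef] at hle
  rw [Set.ncard_pair hef] at htwo
  have := hMs.two_mul_ncard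
  omega

theorem pairwiseAlternatingSquares_of_forcingNum [Fintype V] {n : ℕ} {Ms : Set (Sym2 V)}
    (hcard : Fintype.card V = 2 * n) (hMs : IsPM G Ms) (hf : forcingNum G Ms = n - 1) :
    PairwiseAlternatingSquares G Ms := by
  intro x x' y y' hx hy hne
  obtain ⟨M', hM', hsub, hM'Ms⟩ := exists_isPM_ne_of_forcingNum hcard hMs hf hx hy hne
  obtain ⟨r, hr, hradj⟩ := hM'.exists_isPartner
  obtain ⟨q, hq, -⟩ := hMs.exists_isPartner
  obtain rfl := hq.apply_eq hx
  obtain rfl := hq.apply_eq hy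
  have heq : Set.EqOn r q {x, q x, y, q y}ᶜ := fun v hv => by
    simp only [Set.mem_compl_iff, Set.mem_insert_iff, Set.mem_singleton_iff, not_or] at hv
    exact hr.apply_eq (hsub ⟨hq.mem v, by simp [hv.1, hv.2.1, hv.2.2.1, hv.2.2.2]⟩)
  rcases hr.involutive.rematch_of_eqOn_compl hq.involutive (fun v => (hradj v).ne.symm) heq
    (fun h => hM'Ms (hr.eq_of_isPartner (h ▸ hq))) with ⟨h₁, h₂⟩ | ⟨h₁, h₂⟩
  · exact .inl ⟨h₁ ▸ hradj x, h₂ ▸ hradj (q x)⟩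
  · exact .inr ⟨h₁ ▸ hradj x, h₂ ▸ hradj (q x)⟩

/-- `p`, `q` are the partner maps of `M`, `Ms`; the walk `a₀, q a₀, a₁, q a₁, …` alternates
between edges of `Ms` and of `M`, and `a 1 ≠ a 0` says that its first edge is not in `M`. -/
structure AlternatingWalk (G : SimpleGraph V) (M Ms : Set (Sym2 V)) (p q : V → V)
    (a : ℕ → V) : Prop where
  isPM : IsPM G M
  isPM' : IsPM G Ms
  isPartner : IsPartner M p
  isPartner' : IsPartner Ms q
  succ_eq : ∀ i, a (i + 1) = p (q (a i))
  nontrivial : a 1 ≠ a 0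

namespace AlternatingWalk

variable {M Ms : Set (Sym2 V)} {p q : V → V} {a : ℕ → V}

theorem adj (w : AlternatingWalk G M Ms p q a) (i : ℕ) : G.Adj (q (a i)) (a i) :=
  (w.isPM'.1 (w.isPartner'.mem (a i))).symm

/-- On the alternating walk, `aᵢ` and `q aⱼ` sit at positions of different parity. -/
theorem ne_apply (w : AlternatingWalk G M Ms p q a) (i j : ℕ) : a i ≠ q (a j) := by
  have hswap : ∀ i j, a i = q (a j) → a j = q (a i) := fun i j h => by
    rw [h, w.isPartner'.involutive]
  have hstep : ∀ i j, a (i + 1) = q (a j) → a i = q (a (j + 1)) := fun i j h => by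
    apply hswap
    rw [w.succ_eq, ← h, w.succ_eq, w.isPartner.involutive]
  have key : ∀ d j, a (j + d) ≠ q (a j) := by
    intro d
    induction d using Nat.strong_induction_on with
    | _ d ih =>
      match d with
      | 0 => exact fun j h => (w.adj j).ne h.symm
      | 1 => exact fun j h => (w.isPM.1 (w.isPartner.mem (q (a j)))).ne (by rw [← w.succ_eq, h])
      | d + 2 => exact fun j h => ih d (by omega) (j + 1) (by
          rw [show j + 1 + d = j + d + 1 by omega]; exact hstep _ _ h)
  intro h
  rcases le_total j i with hji | hij
  · obtain ⟨d, rfl⟩ := Nat.exists_eq_add_of_le hji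
    exact key d j h
  · obtain ⟨d, rfl⟩ := Nat.exists_eq_add_of_le hij
    exact key d i (hswap _ _ h)

theorem succ_ne (w : AlternatingWalk G M Ms p q a) (i : ℕ) : a (i + 1) ≠ a i := by
  induction i with
  | zero => exact w.nontrivial
  | succ i ih => exact fun h => ih (w.isPartner'.involutive.injective
      (w.isPartner.involutive.injective (by rw [← w.succ_eq, ← w.succ_eq, h])))

theorem mem (w : AlternatingWalk G M Ms p q a) (i : ℕ) : s(q (a i), a (i + 1)) ∈ M :=
  w.succ_eq i ▸ w.isPartner.mem _

theorem notMem' (w : AlternatingWalk G M Ms p q a) (i : ℕ) : s(q (a i), a (i + 1)) ∉ Ms :=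
  fun h => w.succ_ne i (by rw [← w.isPartner'.apply_eq h, w.isPartner'.involutive])

theorem notMem (w : AlternatingWalk G M Ms p q a) (i : ℕ) : s(a i, q (a i)) ∉ M := fun h =>
  w.succ_ne i (by rw [w.succ_eq, ← w.isPartner.apply_eq h, w.isPartner.involutive])

theorem edge_ne (w : AlternatingWalk G M Ms p q a) {i j : ℕ} (h : a i ≠ a j) :
    s(q (a i), a (i + 1)) ≠ s(q (a j), a (j + 1)) := fun he => by
  rcases Sym2.eq_iff.1 he with ⟨h', -⟩ | ⟨h', -⟩
  · exact h (w.isPartner'.involutive.injective h')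
  · exact w.ne_apply _ _ h'.symm

theorem adj_or_adj (w : AlternatingWalk G M Ms p q a) (hsq : PairwiseAlternatingSquares G Ms)
    {i j : ℕ} (h : a i ≠ a j) : (G.Adj (a i) (a j) ∧ G.Adj (q (a i)) (q (a j))) ∨
      (G.Adj (a i) (q (a j)) ∧ G.Adj (q (a i)) (a j)) :=
  hsq _ _ _ _ (w.isPartner'.mem _) (w.isPartner'.mem _) fun he =>
    (Sym2.eq_iff.1 he).elim (fun h' => h h'.1) fun h' => w.ne_apply _ _ h'.1

theorem exists_reach_of_adj (w : AlternatingWalk G M Ms p q a) (i : ℕ)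
    (h : G.Adj (q (a i)) (a (i + 2))) :
    ∃ M', Relation.ReflTransGen (IsSwitch G) M M' ∧ Ms \ M' ⊂ Ms \ M := by
  obtain ⟨M', hMM', hsub⟩ := w.isPM.exists_reach_square (w.mem i) (w.mem (i + 1))
    (w.edge_ne (w.succ_ne i).symm) (w.adj _).symm h.symm
  exact ⟨M', hMM', Set.sdiff_ssubset_sdiff_of_subset_union hsub (by simp [w.notMem'])
    (by simp) (w.isPartner'.mem (a (i + 1))) (w.notMem (i + 1))⟩

/-- Without the edges `q(a₁) a₃` and `q(a₂) a₄`, the `Ms`-alternating squares on the pairs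
`(a₁, a₃)`, `(a₂, a₄)`, `(a₁, a₂)` and `(a₀, a₃)` supply the chorded hexagons. -/
theorem exists_reach_of_not_adj (w : AlternatingWalk G M Ms p q a)
    (hsq : PairwiseAlternatingSquares G Ms) (h₁ : ¬ G.Adj (q (a 1)) (a 3))
    (h₂ : ¬ G.Adj (q (a 2)) (a 4)) :
    ∃ M', Relation.ReflTransGen (IsSwitch G) M M' ∧ Ms \ M' ⊂ Ms \ M := by
  have hmem' : ∀ i, s(a (i + 1), q (a i)) ∈ M := fun i => Sym2.eq_swap ▸ w.mem i
  have hnot' : ∀ i, s(a (i + 1), q (a i)) ∉ Ms := fun i => Sym2.eq_swap ▸ w.notMem' i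
  have h₃₁ : a 3 ≠ a 1 := fun h => h₁ (h ▸ w.adj 1)
  have h₄₂ : a 4 ≠ a 2 := fun h => h₂ (h ▸ w.adj 2)
  have h₂₀ : a 2 ≠ a 0 := fun h => h₃₁ (by rw [w.succ_eq 2, h, ← w.succ_eq 0])
  have hb₁₃ : G.Adj (q (a 1)) (q (a 3)) :=
    ((w.adj_or_adj hsq h₃₁.symm).resolve_right fun h => h₁ h.2).2
  have ha₂₄ : G.Adj (a 2) (a 4) := ((w.adj_or_adj hsq h₄₂.symm).resolve_right fun h => h₂ h.2).1
  by_cases h₃ : G.Adj (q (a 1)) (q (a 2))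
  · obtain ⟨M', hMM', hsub⟩ := w.isPM.exists_reach_hexagon (w.mem 1) (hmem' 3) (hmem' 2)
      (by simpa [Sym2.eq_swap] using w.edge_ne h₃₁.symm)
      (by simpa [Sym2.eq_swap] using w.edge_ne (w.succ_ne 1).symm)
      (by simpa [Sym2.eq_swap] using w.edge_ne (w.succ_ne 2)) ha₂₄ (w.adj 3) h₃.symm hb₁₃.symm
    exact ⟨M', hMM', Set.sdiff_ssubset_sdiff_of_subset_union hsub (by simp [w.notMem', hnot'])
      (by simp) (Sym2.eq_swap ▸ w.isPartner'.mem _) (Sym2.eq_swap ▸ w.notMem 3)⟩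
  have ha₁b₂ : G.Adj (a 1) (q (a 2)) :=
    ((w.adj_or_adj hsq (w.succ_ne 1).symm).resolve_left fun h => h₃ h.2).1
  by_cases h₄ : G.Adj (q (a 0)) (a 3)
  · obtain ⟨M', hMM', hsub⟩ := w.isPM.exists_reach_hexagon (hmem' 0) (hmem' 2) (hmem' 1)
      (by simpa [Sym2.eq_swap] using w.edge_ne h₂₀.symm)
      (by simpa [Sym2.eq_swap] using w.edge_ne (w.succ_ne 0).symm)
      (by simpa [Sym2.eq_swap] using w.edge_ne (w.succ_ne 1)) h₄ (w.adj 2) (w.adj 1) ha₁b₂.symm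
    exact ⟨M', hMM', Set.sdiff_ssubset_sdiff_of_subset_union hsub (by simp [hnot'])
      (by simp) (Sym2.eq_swap ▸ w.isPartner'.mem _) (Sym2.eq_swap ▸ w.notMem 2)⟩
  have h₃₀ : a 3 ≠ a 0 := fun h => h₄ (h ▸ w.adj 0)
  have hb₀₃ : G.Adj (q (a 0)) (q (a 3)) :=
    ((w.adj_or_adj hsq h₃₀.symm).resolve_right fun h => h₄ h.2).2
  obtain ⟨M', hMM', hsub⟩ := w.isPM.exists_reach_hexagon (w.mem 1) (hmem' 3) (w.mem 0)
    (by simpa [Sym2.eq_swap] using w.edge_ne h₃₁.symm) (w.edge_ne (w.succ_ne 0))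
    (by simpa [Sym2.eq_swap] using w.edge_ne h₃₀) ha₂₄ hb₀₃.symm (w.adj 1).symm hb₁₃.symm
  exact ⟨M', hMM', Set.sdiff_ssubset_sdiff_of_subset_union hsub (by simp [w.notMem', hnot'])
    (by simp) (w.isPartner'.mem _) (w.notMem 1)⟩

theorem exists_reach_ssubset (w : AlternatingWalk G M Ms p q a)
    (hsq : PairwiseAlternatingSquares G Ms) :
    ∃ M', Relation.ReflTransGen (IsSwitch G) M M' ∧ Ms \ M' ⊂ Ms \ M := by
  by_cases h₁ : G.Adj (q (a 1)) (a 3)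
  · exact w.exists_reach_of_adj 1 h₁
  by_cases h₂ : G.Adj (q (a 2)) (a 4)
  · exact w.exists_reach_of_adj 2 h₂
  exact w.exists_reach_of_not_adj hsq h₁ h₂

end AlternatingWalk

theorem reflTransGen_isSwitch [Finite V] {M Ms : Set (Sym2 V)} (hMs : IsPM G Ms)
    (hsq : PairwiseAlternatingSquares G Ms) (hM : IsPM G M) :
    Relation.ReflTransGen (IsSwitch G) M Ms := by
  obtain ⟨q, hq, -⟩ := hMs.exists_isPartner
  induction hk : (Ms \ M).ncard using Nat.strong_induction_on generalizing M with
  | _ k ih =>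
  obtain ⟨p, hp, -⟩ := hM.exists_isPartner
  by_cases hpq : p = q
  · rw [hp.eq_of_isPartner (hpq ▸ hq)]
  obtain ⟨x, hx⟩ := Function.ne_iff.1 hpq
  have hw : AlternatingWalk G M Ms p q fun i => (p ∘ q)^[i] x :=
    ⟨hM, hMs, hp, hq, fun i => iterate_succ_apply' _ _ _, fun h =>
      hx ((congrArg p h).symm.trans (hp.involutive (q x)))⟩
  obtain ⟨M', hMM', hlt⟩ := hw.exists_reach_ssubset hsq
  exact hMM'.trans (ih _ (hk ▸ Set.ncard_lt_ncard hlt) (hM.of_reflTransGen_isSwitch hMM') rfl)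

end

/-- main claim in the proof of Theorem 5.9. -/
theorem stmt19 {V : Type*} [Fintype V] (n : ℕ)
    (G : SimpleGraph V) (hcard : Fintype.card V = 2 * n)
    (Ms : Set (Sym2 V)) (hMs : IsPM G Ms) (hfMs : forcingNum G Ms = n - 1)
    (M : Set (Sym2 V)) (hM : IsPM G M) :
    ∃ (r : ℕ) (seq : Fin (r + 1) → Set (Sym2 V)),
      seq 0 = M ∧ seq (Fin.last r) = Ms ∧ (∀ i, IsPM G (seq i)) ∧
      ∀ i : Fin r, ∃ a b c d : V,
        a ≠ b ∧ a ≠ c ∧ a ≠ d ∧ b ≠ c ∧ b ≠ d ∧ c ≠ d ∧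
        G.Adj a b ∧ G.Adj b c ∧ G.Adj c d ∧ G.Adj d a ∧
        s(a, b) ∈ seq i.castSucc ∧ s(c, d) ∈ seq i.castSucc ∧
        s(b, c) ∉ seq i.castSucc ∧ s(d, a) ∉ seq i.castSucc ∧
        seq i.succ = symmDiff (seq i.castSucc)
          {s(a, b), s(b, c), s(c, d), s(d, a)} := by
  obtain ⟨r, seq, h₀, hlast, hstep⟩ := (reflTransGen_isSwitch hMs
    (pairwiseAlternatingSquares_of_forcingNum hcard hMs hfMs) hM).exists_fin_chain
  refine ⟨r, seq, h₀, hlast, fun i => ?_, hstep⟩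
  induction i using Fin.induction with
  | zero => exact h₀ ▸ hM
  | succ i ih => exact (hstep i).isPM ih
end
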